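/- Let f : ℝ^m → ℝ be L-smooth, 0 < γ < 1/L, x any point, g any vector, and x⁺ = x - γg. Then f(x⁺) ≤ f(x) + (γ/4)(Lγ - 1)‖∇f(x)‖² + (γ/2)(2 - Lγ)‖g - ∇f(x)‖². -/

import Mathlib

/-!
Along the segment `t ↦ x + t • v`, the Lipschitz bound on `∇f` makes
`t ↦ f (x + t • v) - t ⟪∇f x, v⟫ - (L / 2) t² ‖v‖²` antitone, which is the descent lemma
`f (x + v) ≤ f x + ⟪∇f x, v⟫ + (L / 2) ‖v‖²`. For `v = -γ g` the polarization identity turns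
the right-hand side into `f x + (γ / 2) (‖g - ∇f x‖² - ‖∇f x‖²) + (γ / 2) (Lγ - 1) ‖g‖²`;
since `Lγ - 1 < 0`, the lower bound `‖g‖² ≥ ‖∇f x‖² / 2 - ‖g - ∇f x‖²` finishes the estimate.
-/

open RealInnerProductSpace

section

variable {E : Type*} [NormedAddCommGroup E] [InnerProductSpace ℝ E]

theorem half_norm_sq_sub_norm_sq_le_norm_add_sq (u v : E) :
    ‖u‖ ^ 2 / 2 - ‖v‖ ^ 2 ≤ ‖u + v‖ ^ 2 := by
  have h := parallelogram_law_with_norm ℝ (u + v) v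
  rw [add_sub_cancel_right] at h
  nlinarith [norm_nonneg (u + v + v)]

theorem inner_neg_smul_add_norm_sq_le {L γ : ℝ} (hγ : 0 ≤ γ) (hLγ : L * γ ≤ 1) (a g : E) :
    ⟪a, -(γ • g)⟫ + L / 2 * ‖-(γ • g)‖ ^ 2 ≤
      γ / 4 * (L * γ - 1) * ‖a‖ ^ 2 + γ / 2 * (2 - L * γ) * ‖g - a‖ ^ 2 := by
  have polarization : ⟪a, g⟫ = (‖a‖ ^ 2 + ‖g‖ ^ 2 - ‖g - a‖ ^ 2) / 2 := by
    rw [norm_sub_sq_real, real_inner_comm]; ring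
  have lower : ‖a‖ ^ 2 / 2 - ‖g - a‖ ^ 2 ≤ ‖g‖ ^ 2 := by
    simpa using half_norm_sq_sub_norm_sq_le_norm_add_sq a (g - a)
  have scaled := mul_le_mul_of_nonneg_left lower (mul_nonneg hγ (sub_nonneg.mpr hLγ))
  rw [inner_neg_right, inner_smul_right, norm_neg, norm_smul, mul_pow, Real.norm_eq_abs, sq_abs,
    polarization]
  nlinarith [mul_nonneg hγ (sq_nonneg ‖a‖)]

variable [CompleteSpace E] {f : E → ℝ} {L : ℝ}

theorem hasDerivAt_comp_add_smul {x v : E} {t : ℝ} (hf : DifferentiableAt ℝ f (x + t • v)) :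
    HasDerivAt (fun s : ℝ => f (x + s • v)) ⟪gradient f (x + t • v), v⟫ t := by
  have hline : HasDerivAt (fun s : ℝ => x + s • v) v t := by
    simpa using ((hasDerivAt_id t).smul_const v).const_add x
  simpa [Function.comp_def] using hf.hasGradientAt.hasFDerivAt.comp_hasDerivAt t hline

theorem inner_gradient_sub_le_of_lipschitz
    (hsmooth : ∀ x y, ‖gradient f x - gradient f y‖ ≤ L * ‖x - y‖) (x v : E) {t : ℝ} (ht : 0 ≤ t) :
    ⟪gradient f (x + t • v) - gradient f x, v⟫ ≤ L * t * ‖v‖ ^ 2 :=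
  calc ⟪gradient f (x + t • v) - gradient f x, v⟫
      ≤ ‖gradient f (x + t • v) - gradient f x‖ * ‖v‖ := real_inner_le_norm _ _
    _ ≤ L * ‖x + t • v - x‖ * ‖v‖ := by gcongr; exact hsmooth _ _
    _ = L * t * ‖v‖ ^ 2 := by
      rw [add_sub_cancel_left, norm_smul, Real.norm_of_nonneg ht]; ring

theorem image_add_le_of_gradient_lipschitz (hdiff : Differentiable ℝ f)
    (hsmooth : ∀ x y, ‖gradient f x - gradient f y‖ ≤ L * ‖x - y‖) (x v : E) :
    f (x + v) ≤ f x + ⟪gradient f x, v⟫ + L / 2 * ‖v‖ ^ 2 := by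
  set φ : ℝ → ℝ := fun t => f (x + t • v) - t * ⟪gradient f x, v⟫ - L / 2 * t ^ 2 * ‖v‖ ^ 2
  have hφ : ∀ t, HasDerivAt φ
      (⟪gradient f (x + t • v), v⟫ - ⟪gradient f x, v⟫ - L * t * ‖v‖ ^ 2) t := by
    intro t
    have hquad : HasDerivAt (fun s : ℝ => L / 2 * s ^ 2 * ‖v‖ ^ 2) (L * t * ‖v‖ ^ 2) t :=
      (((hasDerivAt_pow 2 t).const_mul (L / 2)).mul_const (‖v‖ ^ 2)).congr_deriv
        (by push_cast; ring)
    exact ((hasDerivAt_comp_add_smul (hdiff _)).sub ((hasDerivAt_id t).mul_const _)).sub hquad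
      |>.congr_deriv (by simp)
  have hanti : AntitoneOn φ (Set.Icc 0 1) := by
    refine antitoneOn_of_hasDerivWithinAt_nonpos (convex_Icc 0 1)
      (fun t _ => (hφ t).continuousAt.continuousWithinAt) (fun t _ => (hφ t).hasDerivWithinAt)
      fun t ht => ?_
    rw [interior_Icc] at ht
    have := inner_gradient_sub_le_of_lipschitz hsmooth x v ht.1.le
    rw [inner_sub_left] at this
    linarith
  have h10 : φ 1 ≤ φ 0 := hanti (by simp) (by simp) zero_le_one
  simp only [φ, one_smul, one_mul, one_pow, mul_one, zero_smul, add_zero, zero_mul,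
    sub_zero, ne_eq, OfNat.ofNat_ne_zero, not_false_eq_true, zero_pow, mul_zero] at h10
  linarith

end

/-- Descent inequality for a gradient step with an inexact gradient `g`:
if `f` is `L`-smooth and `0 < γ < 1/L`, then
`f(x - γg) ≤ f(x) + (γ/4)(Lγ - 1)‖∇f(x)‖² + (γ/2)(2 - Lγ)‖g - ∇f(x)‖²`. -/
theorem inexact_descent_step {m : ℕ} (f : EuclideanSpace ℝ (Fin m) → ℝ) (L : ℝ)
    (hdiff : Differentiable ℝ f)
    (hsmooth : ∀ x y, ‖gradient f x - gradient f y‖ ≤ L * ‖x - y‖)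
    (γ : ℝ) (hγ : 0 < γ) (hγL : γ < 1 / L)
    (x g : EuclideanSpace ℝ (Fin m)) :
    f (x - γ • g) ≤ f x + γ / 4 * (L * γ - 1) * ‖gradient f x‖ ^ 2
      + γ / 2 * (2 - L * γ) * ‖g - gradient f x‖ ^ 2 := by
  have hL : 0 < L := one_div_pos.mp (hγ.trans hγL)
  have hLγ : L * γ ≤ 1 := by
    rw [lt_div_iff₀ hL] at hγL; linarith
  have descent := image_add_le_of_gradient_lipschitz hdiff hsmooth x (-(γ • g))
  have step := inner_neg_smul_add_norm_sq_le hγ.le hLγ (gradient f x) g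
  rw [← sub_eq_add_neg] at descent
  linarith
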